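/- arXiv:2512.01143 — 3 statements merged into one kernel-verified Lean document; each statement's English description precedes it below -/
import Mathlib

section
/- Let n ≥ 2 and let u ∈ ℤⁿ be a primitive vector. Then the subgroup L = {a ∈ ℤⁿ : ⟨u,a⟩ = 0} is a free abelian group of rank n − 1, and for every ℤ-basis b₁, …, b_{n−1} of L, the Gram determinant det(⟨bᵢ, bⱼ⟩)_{i,j} equals ‖u‖²; equivalently, L is a lattice of covolume ‖u‖ in the hyperplane u^⊥ equipped with the induced Euclidean structure. -/
noncomputable def stmt3Phi {n : ℕ} (u : Fin n → ℤ) : (Fin n → ℤ) →ₗ[ℤ] ℤ where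
  toFun a := ∑ i, u i * a i
  map_add' a b := by simp [mul_add, Finset.sum_add_distrib]
  map_smul' c a := by simp [Finset.mul_sum, smul_eq_mul, mul_left_comm]

@[simp] lemma stmt3Phi_apply {n : ℕ} (u a : Fin n → ℤ) :
    stmt3Phi u a = ∑ i, u i * a i := rfl

lemma stmt3_exists_one {n : ℕ} (u : Fin n → ℤ) (hu : Finset.univ.gcd u = 1) :
    ∃ v : Fin n → ℤ, stmt3Phi u v = 1 := by
  have hmem : ∀ i, u i ∈ LinearMap.range (stmt3Phi u) := fun i =>
    ⟨Pi.single i 1, by simp [Pi.single_apply, mul_ite, Finset.sum_ite_eq']⟩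
  obtain ⟨d, hd⟩ : Submodule.IsPrincipal (LinearMap.range (stmt3Phi u)) :=
    IsPrincipalIdealRing.principal (LinearMap.range (stmt3Phi u) : Ideal ℤ)
  have hdvd : ∀ i, d ∣ u i := by
    intro i
    have := hmem i
    rw [hd, Submodule.mem_span_singleton] at this
    obtain ⟨c, hc⟩ := this
    exact ⟨c, by rw [← hc, smul_eq_mul, mul_comm]⟩
  have h1 : d ∣ 1 := hu ▸ Finset.dvd_gcd (fun i _ => hdvd i)
  obtain ⟨c, hc⟩ := h1
  have : (1 : ℤ) ∈ LinearMap.range (stmt3Phi u) := by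
    rw [hd, Submodule.mem_span_singleton]
    exact ⟨c, by rw [smul_eq_mul, mul_comm, ← hc]⟩
  exact this

/-- For a primitive vector `u ∈ ℤⁿ` (`n ≥ 2`), the subgroup
`L = {a ∈ ℤⁿ : ⟨u,a⟩ = 0}` is free abelian of rank `n − 1`, and for every ℤ-basis
`b₁, …, b_{n−1}` of `L` the Gram determinant `det(⟨bᵢ,bⱼ⟩)` equals `‖u‖²`. -/
theorem stmt3 (n : ℕ) (hn : 2 ≤ n) (u : Fin n → ℤ) (hu : Finset.univ.gcd u = 1)
    (L : Submodule ℤ (Fin n → ℤ)) (hL : ∀ a : Fin n → ℤ, a ∈ L ↔ ∑ i, u i * a i = 0) :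
    Module.Free ℤ L ∧ Module.finrank ℤ L = n - 1 ∧
    ∀ b : Module.Basis (Fin (n - 1)) ℤ L,
      Matrix.det (Matrix.of fun i j : Fin (n - 1) =>
          (inner ℝ ((EuclideanSpace.equiv (Fin n) ℝ).symm
              (fun k => (((b i : Fin n → ℤ)) k : ℝ)))
            ((EuclideanSpace.equiv (Fin n) ℝ).symm
              (fun k => (((b j : Fin n → ℤ)) k : ℝ))) : ℝ)) =
        ‖(EuclideanSpace.equiv (Fin n) ℝ).symm (fun i => (u i : ℝ))‖ ^ 2 := by
  classical
  obtain ⟨m, rfl⟩ : ∃ m, n = m + 1 := ⟨n - 1, by omega⟩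
  have hker : ∀ a, a ∈ L ↔ stmt3Phi u a = 0 := by
    intro a; rw [hL a, stmt3Phi_apply]
  obtain ⟨v, hv⟩ := stmt3_exists_one u hu
  have hli : ∀ (c : ℤ), ∀ x ∈ L, c • v + x = 0 → c = 0 := by
    intro c x hx h
    have h2 := congrArg (stmt3Phi u) h
    rw [map_add, map_smul, hv, (hker x).mp hx, map_zero] at h2
    simpa using h2
  have hsp : ∀ z : Fin (m+1) → ℤ, ∃ c : ℤ, z + c • v ∈ L := by
    intro z
    refine ⟨-(stmt3Phi u z), ?_⟩
    rw [hker, map_add, map_smul, hv, smul_eq_mul, mul_one, add_neg_cancel]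
  -- free and rank
  obtain ⟨k, bL⟩ := Submodule.basisOfPid (Pi.basisFun ℤ (Fin (m+1))) L
  have hfree : Module.Free ℤ L := Module.Free.of_basis bL
  have hk : k = m := by
    have cB := Module.Basis.mkFinCons v bL hli hsp
    have hcard := Fintype.card_congr (Module.Basis.indexEquiv cB (Pi.basisFun ℤ (Fin (m+1))))
    simpa using hcard
  refine ⟨hfree, by rw [Module.finrank_eq_card_basis bL, Fintype.card_fin]; omega, ?_⟩
  intro b
  -- basis of ℤ^n extending b
  set cB : Module.Basis (Fin (m+1)) ℤ (Fin (m+1) → ℤ) := Module.Basis.mkFinCons v b hli hsp with hcB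
  have hcB0 : (cB 0 : Fin (m+1) → ℤ) = v := by
    rw [hcB, Module.Basis.coe_mkFinCons]; rfl
  have hcBs : ∀ j : Fin m, (cB j.succ : Fin (m+1) → ℤ) = (b j : Fin (m+1) → ℤ) := by
    intro j; rw [hcB, Module.Basis.coe_mkFinCons]; rfl
  set S : ℤ := ∑ i, u i * u i with hSdef
  have hSne : S ≠ 0 := by
    intro h0
    have hz : ∀ i ∈ (Finset.univ : Finset (Fin (m+1))), u i * u i = 0 :=
      (Finset.sum_eq_zero_iff_of_nonneg (fun i _ => mul_self_nonneg (u i))).mp h0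
    have hu0 : ∀ i ∈ (Finset.univ : Finset (Fin (m+1))), u i = 0 := by
      intro i hi
      exact mul_self_eq_zero.mp (hz i hi)
    rw [Finset.gcd_eq_zero_iff.mpr hu0] at hu
    exact absurd hu (by norm_num)
  -- matrices
  set M : Matrix (Fin (m+1)) (Fin (m+1)) ℤ := Matrix.of fun i j => (cB j : Fin (m+1) → ℤ) i with hM
  have hMtm : M = (Pi.basisFun ℤ (Fin (m+1))).toMatrix cB := by
    ext i j
    rw [Module.Basis.toMatrix_apply, Pi.basisFun_repr]
    rfl
  have hMunit : IsUnit M.det := by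
    rw [hMtm]
    exact Matrix.isUnit_det_of_right_inverse (Module.Basis.toMatrix_mul_toMatrix_flip (Pi.basisFun ℤ (Fin (m+1))) cB)
  have hMsq : M.det * M.det = 1 := by
    rcases Int.isUnit_iff.mp hMunit with h | h <;> rw [h] <;> norm_num
  -- φ values on the basis
  have hφcB0 : stmt3Phi u (cB 0) = 1 := by rw [hcB0, hv]
  have hφcBs : ∀ j : Fin m, stmt3Phi u ((cB j.succ : Fin (m+1) → ℤ)) = 0 := by
    intro j; rw [hcBs j]; exact (hker _).mp (b j).2
  -- coordinates of u in the basis cB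
  set e : Fin (m+1) → ℤ := fun k => cB.repr u k with he
  have he0 : e 0 = S := by
    have h1 : stmt3Phi u (∑ k, cB.repr u k • (cB k : Fin (m+1) → ℤ)) = stmt3Phi u u := by
      rw [cB.sum_repr u]
    rw [map_sum] at h1
    simp only [map_smul, smul_eq_mul] at h1
    rw [Fin.sum_univ_succ, hφcB0, mul_one] at h1
    simp only [hφcBs, mul_zero, Finset.sum_const_zero, add_zero] at h1
    exact h1
  set E : Matrix (Fin (m+1)) (Fin (m+1)) ℤ := (1 : Matrix (Fin (m+1)) (Fin (m+1)) ℤ).updateCol 0 e with hE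
  have hEdet : E.det = S := by
    rw [hE, ← Matrix.cramer_apply, Matrix.cramer_one, ← he0]
    rfl
  set Mp : Matrix (Fin (m+1)) (Fin (m+1)) ℤ :=
    Matrix.of (fun i j => Fin.cases (u i) (fun j' => (b j' : Fin (m+1) → ℤ) i) j) with hMp
  have hMpME : Mp = M * E := by
    ext i j
    rw [Matrix.mul_apply]
    refine Fin.cases ?_ ?_ j
    · simp only [hE, Matrix.updateCol_self]
      have hrep : u = ∑ k, e k • (cB k : Fin (m+1) → ℤ) := by
        rw [he]; exact (cB.sum_repr u).symm
      have : Mp i 0 = u i := rfl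
      rw [this, hrep]
      rw [Finset.sum_apply]
      refine Finset.sum_congr rfl (fun k _ => ?_)
      simp only [Pi.smul_apply, smul_eq_mul, hM, Matrix.of_apply]
      ring
    · intro j'
      have h2 : ∀ k, E k j'.succ = (1 : Matrix (Fin (m+1)) (Fin (m+1)) ℤ) k j'.succ := by
        intro k
        rw [hE, Matrix.updateCol_ne (Fin.succ_ne_zero j')]
      simp only [h2, Matrix.one_apply]
      rw [Finset.sum_congr rfl (fun k _ => by rw [mul_ite, mul_one, mul_zero]),
        Finset.sum_ite_eq' Finset.univ j'.succ (fun k => M i k)]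
      simp only [Finset.mem_univ, if_true]
      show Mp i j'.succ = M i j'.succ
      rw [hMp, hM]
      simp only [Matrix.of_apply]
      rw [hcBs j']
      rfl
  -- the Gram matrix of b
  set G : Matrix (Fin (m + 1 - 1)) (Fin (m + 1 - 1)) ℤ :=
    Matrix.of (fun i j => ∑ k, (b i : Fin (m+1) → ℤ) k * (b j : Fin (m+1) → ℤ) k) with hG
  set Gf : Matrix (Fin (m+1)) (Fin (m+1)) ℤ := Mp.transpose * Mp with hGf
  have hGf00 : Gf 0 0 = S := by
    rw [hGf, Matrix.mul_apply, hSdef]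
    rfl
  have hGf0s : ∀ j : Fin m, Gf 0 j.succ = 0 := by
    intro j
    have : Gf 0 j.succ = stmt3Phi u (b j : Fin (m+1) → ℤ) := by
      rw [hGf, Matrix.mul_apply, stmt3Phi_apply]
      rfl
    rw [this]
    exact (hker _).mp (b j).2
  have hGfs : ∀ i j : Fin (m + 1 - 1), Gf (Fin.succ i) (Fin.succ j) = G i j := by
    intro i j
    rw [hGf, Matrix.mul_apply, hG]
    rfl
  have hdetGf : Gf.det = S * G.det := by
    rw [Matrix.det_succ_row_zero, Fin.sum_univ_succ]
    simp only [hGf0s, mul_zero, zero_mul, Finset.sum_const_zero, add_zero]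
    rw [hGf00]
    simp only [Fin.val_zero, pow_zero, one_mul]
    have hsub : Gf.submatrix Fin.succ (Fin.succAbove 0) = G := by
      ext i j
      rw [Matrix.submatrix_apply, Fin.succAbove_zero]
      exact hGfs i j
    rw [hsub]
  have hdet1 : Gf.det = S * S := by
    rw [hGf, Matrix.det_mul, Matrix.det_transpose, hMpME, Matrix.det_mul, hEdet,
      mul_mul_mul_comm, hMsq, one_mul]
  have hdetG : G.det = S := mul_left_cancel₀ hSne (hdetGf.symm.trans hdet1)
  -- cast to ℝ
  have hcast : (Matrix.of fun i j : Fin (m + 1 - 1) =>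
      (inner ℝ ((EuclideanSpace.equiv (Fin (m+1)) ℝ).symm
          (fun k => (((b i : Fin (m+1) → ℤ)) k : ℝ)))
        ((EuclideanSpace.equiv (Fin (m+1)) ℝ).symm
          (fun k => (((b j : Fin (m+1) → ℤ)) k : ℝ))) : ℝ)) =
      G.map (Int.cast : ℤ → ℝ) := by
    ext i j
    show (inner ℝ ((EuclideanSpace.equiv (Fin (m+1)) ℝ).symm
          (fun k => (((b i : Fin (m+1) → ℤ)) k : ℝ)))
        ((EuclideanSpace.equiv (Fin (m+1)) ℝ).symm
          (fun k => (((b j : Fin (m+1) → ℤ)) k : ℝ))) : ℝ) = _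
    simp only [PiLp.continuousLinearEquiv_symm_apply, EuclideanSpace.inner_toLp_toLp]
    rw [Matrix.map_apply, hG]
    simp [dotProduct, mul_comm]
  have h3 : (G.map (Int.cast : ℤ → ℝ)).det = ((G.det : ℤ) : ℝ) :=
    (RingHom.map_det (Int.castRingHom ℝ) G).symm
  rw [hcast, h3, hdetG]
  have hnorm : ‖(EuclideanSpace.equiv (Fin (m+1)) ℝ).symm (fun i => (u i : ℝ))‖ ^ 2 = (S : ℝ) := by
    rw [← real_inner_self_eq_norm_sq]
    simp only [PiLp.continuousLinearEquiv_symm_apply, EuclideanSpace.inner_toLp_toLp]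
    simp [dotProduct, hSdef]
  rw [hnorm]
end

section
/- Let E be a finite-dimensional real inner product space, let P and P' be subspaces of E with dim P = k ≥ 1, and let π denote the orthogonal projection of E onto P'. Then there exists an orthonormal basis v₁, …, v_k of P such that: (i) ⟨π(vᵢ), π(vⱼ)⟩ = 0 whenever i ≠ j; (ii) ‖π(v₁)‖ ≤ ‖π(v₂)‖ ≤ ⋯ ≤ ‖π(v_k)‖; and (iii) for each 0 ≤ s < k, the value ‖π(v_{s+1})‖ is the minimum of ‖π(v)‖ over all unit vectors v ∈ P orthogonal to v₁, …, v_s. -/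
/-- Let `P, P'` be subspaces of a finite-dimensional real inner product
space `E`, with `dim P = k ≥ 1`, and let `π` be the orthogonal projection onto `P'`. There is
an orthonormal basis `v₁, …, v_k` of `P` whose projections `π(vᵢ)` are pairwise orthogonal
with nondecreasing norms, and each `‖π(vᵢ)‖` is the minimum of `‖π(v)‖` over unit vectors of
`P` orthogonal to the previously chosen vectors. -/
theorem stmt13 {E : Type*} [NormedAddCommGroup E] [InnerProductSpace ℝ E]
    [FiniteDimensional ℝ E] (P P' : Submodule ℝ E) (k : ℕ) (hk : 1 ≤ k)
    (hP : Module.finrank ℝ P = k) :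
    ∃ v : Fin k → E, Orthonormal ℝ v ∧ (∀ i, v i ∈ P) ∧
      Submodule.span ℝ (Set.range v) = P ∧
      (∀ i j : Fin k, i ≠ j →
        (inner ℝ ((P'.orthogonalProjectionOnto (v i) : E)) ((P'.orthogonalProjectionOnto (v j) : E)) :
          ℝ) = 0) ∧
      (∀ i j : Fin k, i ≤ j →
        ‖(P'.orthogonalProjectionOnto (v i) : E)‖ ≤ ‖(P'.orthogonalProjectionOnto (v j) : E)‖) ∧
      (∀ i : Fin k, IsLeast
        {r : ℝ | ∃ w : E, w ∈ P ∧ ‖w‖ = 1 ∧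
          (∀ j : Fin k, j < i → (inner ℝ (v j) w : ℝ) = 0) ∧
          r = ‖(P'.orthogonalProjectionOnto w : E)‖}
        ‖(P'.orthogonalProjectionOnto (v i) : E)‖) := by
  classical
  let T : P →ₗ[ℝ] P :=
    ((P.orthogonalProjectionOnto).toLinearMap.comp
      (P'.subtype.comp (P'.orthogonalProjectionOnto).toLinearMap)).comp P.subtype
  have key : ∀ x y : P, (inner ℝ (T x) y : ℝ) =
      inner ℝ ((P'.orthogonalProjectionOnto (x:E) : E)) ((P'.orthogonalProjectionOnto (y:E) : E)) := by
    intro x y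
    show (inner ℝ (P.orthogonalProjectionOnto ((P'.orthogonalProjectionOnto (x:E) : E))) y : ℝ) = _
    rw [Submodule.inner_orthogonalProjectionOnto_eq_of_mem_right]
    rw [← Submodule.coe_inner, ← Submodule.inner_orthogonalProjectionOnto_eq_of_mem_left, Submodule.coe_inner]
  have hsym : T.IsSymmetric := by
    intro x y
    calc (inner ℝ (T x) y : ℝ) = _ := key x y
      _ = inner ℝ ((P'.orthogonalProjectionOnto (y:E) : E)) ((P'.orthogonalProjectionOnto (x:E) : E)) :=
          real_inner_comm _ _
      _ = inner ℝ (T y) x := (key y x).symm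
      _ = inner ℝ x (T y) := real_inner_comm _ _
  let b := hsym.eigenvectorBasis hP
  let lam := hsym.eigenvalues hP
  let σ := Tuple.sort lam
  let μ : Fin k → ℝ := lam ∘ σ
  have hμmono : Monotone μ := Tuple.monotone_sort lam
  let u : OrthonormalBasis (Fin k) ℝ P := b.reindex σ.symm
  have hu : ∀ i, u i = b (σ i) := fun i => b.reindex_apply σ.symm i
  have hTu : ∀ i, T (u i) = μ i • u i := by
    intro i
    rw [hu]
    exact hsym.apply_eigenvectorBasis hP (σ i)
  have hinner : ∀ i j, (inner ℝ ((P'.orthogonalProjectionOnto ((u i : P) : E) : E))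
      ((P'.orthogonalProjectionOnto ((u j : P) : E) : E)) : ℝ) = μ i * inner ℝ (u i) (u j) := by
    intro i j
    rw [← key, hTu, real_inner_smul_left]
  have hnormsq : ∀ i, ‖(P'.orthogonalProjectionOnto ((u i : P) : E) : E)‖ ^ 2 = μ i := by
    intro i
    calc ‖(P'.orthogonalProjectionOnto ((u i : P) : E) : E)‖ ^ 2
        = inner ℝ ((P'.orthogonalProjectionOnto ((u i : P) : E) : E))
          ((P'.orthogonalProjectionOnto ((u i : P) : E) : E)) :=
          (real_inner_self_eq_norm_sq _).symm
      _ = μ i * inner ℝ (u i) (u i) := hinner i i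
      _ = μ i * ‖u i‖ ^ 2 := by rw [real_inner_self_eq_norm_sq]
      _ = μ i := by rw [u.orthonormal.1 i]; ring
  have hnorm : ∀ i, ‖(P'.orthogonalProjectionOnto ((u i : P) : E) : E)‖ = Real.sqrt (μ i) := by
    intro i
    rw [← hnormsq i, Real.sqrt_sq (norm_nonneg _)]
  refine ⟨fun i => ((u i : P) : E), ?_, fun i => (u i).2, ?_, ?_, ?_, ?_⟩
  · constructor
    · intro i
      exact u.orthonormal.1 i
    · intro i j hij
      rw [← Submodule.coe_inner]
      exact u.orthonormal.2 hij
  · -- span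
    have h1 : Set.range (fun i => ((u i : P) : E)) = P.subtype '' Set.range (fun i => u i) := by
      ext x
      constructor
      · rintro ⟨i, rfl⟩; exact ⟨u i, ⟨i, rfl⟩, rfl⟩
      · rintro ⟨y, ⟨i, rfl⟩, rfl⟩; exact ⟨i, rfl⟩
    rw [h1, Submodule.span_image]
    have h2 : Submodule.span ℝ (Set.range (fun i => u i)) = ⊤ := by
      rw [show (fun i => u i) = ⇑u.toBasis from (funext fun i => (u.coe_toBasis ▸ rfl))]
      exact u.toBasis.span_eq
    rw [h2, Submodule.map_subtype_top]
  · -- pairwise orthogonality of projections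
    intro i j hij
    rw [hinner i j, u.orthonormal.2 hij, mul_zero]
  · -- monotone norms
    intro i j hij
    rw [hnorm i, hnorm j]
    exact Real.sqrt_le_sqrt (hμmono hij)
  · -- IsLeast
    intro i
    constructor
    · exact ⟨((u i : P) : E), (u i).2, u.orthonormal.1 i,
        fun j hj => by
          rw [← Submodule.coe_inner]
          exact u.orthonormal.2 (ne_of_lt hj), rfl⟩
    · rintro r ⟨w, hwP, hw1, hworth, rfl⟩
      set w' : P := ⟨w, hwP⟩ with hw'
      have hsum1 : ∑ j, (inner ℝ (u j) w' : ℝ) ^ 2 = 1 := by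
        calc ∑ j, (inner ℝ (u j) w' : ℝ) ^ 2
            = ∑ j, (inner ℝ w' (u j) : ℝ) * inner ℝ (u j) w' := by
              refine Finset.sum_congr rfl fun j _ => ?_
              rw [sq, real_inner_comm (u j) w']
          _ = inner ℝ w' w' := u.sum_inner_mul_inner w' w'
          _ = ‖w'‖ ^ 2 := real_inner_self_eq_norm_sq _
          _ = 1 := by
              have : ‖w'‖ = ‖w‖ := rfl
              rw [this, hw1]; norm_num
      have hsum2 : ‖(P'.orthogonalProjectionOnto w : E)‖ ^ 2
          = ∑ j, μ j * (inner ℝ (u j) w' : ℝ) ^ 2 := by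
        calc ‖(P'.orthogonalProjectionOnto w : E)‖ ^ 2
            = inner ℝ ((P'.orthogonalProjectionOnto w : E)) ((P'.orthogonalProjectionOnto w : E)) :=
              (real_inner_self_eq_norm_sq _).symm
          _ = inner ℝ (T w') w' := (key w' w').symm
          _ = ∑ j, (inner ℝ (T w') (u j) : ℝ) * inner ℝ (u j) w' :=
              (u.sum_inner_mul_inner _ _).symm
          _ = ∑ j, μ j * (inner ℝ (u j) w' : ℝ) ^ 2 := by
              refine Finset.sum_congr rfl fun j _ => ?_
              rw [hsym w' (u j), hTu j, real_inner_smul_right, real_inner_comm w' (u j), sq]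
              ring
      have hterm : ∀ j, μ i * (inner ℝ (u j) w' : ℝ) ^ 2 ≤ μ j * (inner ℝ (u j) w' : ℝ) ^ 2 := by
        intro j
        rcases lt_or_ge j i with h | h
        · have hz : (inner ℝ (u j) w' : ℝ) = 0 := by
            rw [Submodule.coe_inner]
            exact hworth j h
          rw [hz]
          simp
        · exact mul_le_mul_of_nonneg_right (hμmono h) (sq_nonneg _)
      have hle : μ i ≤ ‖(P'.orthogonalProjectionOnto w : E)‖ ^ 2 := by
        calc μ i = μ i * ∑ j, (inner ℝ (u j) w' : ℝ) ^ 2 := by rw [hsum1, mul_one]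
          _ = ∑ j, μ i * (inner ℝ (u j) w' : ℝ) ^ 2 := Finset.mul_sum _ _ _
          _ ≤ ∑ j, μ j * (inner ℝ (u j) w' : ℝ) ^ 2 := Finset.sum_le_sum fun j _ => hterm j
          _ = _ := hsum2.symm
      rw [hnorm i]
      calc Real.sqrt (μ i) ≤ Real.sqrt (‖(P'.orthogonalProjectionOnto w : E)‖ ^ 2) :=
            Real.sqrt_le_sqrt hle
        _ = ‖(P'.orthogonalProjectionOnto w : E)‖ := Real.sqrt_sq (norm_nonneg _)
end

section
/- Let k ≥ 1 and let 𝒜_k denote the set of real 2k × k matrices A, written in block form A = [B; C] with B the top k × k block and C the bottom k × k block, satisfying: (a) AᵀA = I_k; (b) both B and C are in row echelon form with positive pivots; (c) the Euclidean norms of the columns of C are nondecreasing, i.e., ‖C e₁‖ ≤ ‖C e₂‖ ≤ ⋯ ≤ ‖C e_k‖. Then for every k-dimensional linear subspace P of ℝ^{2k} there exist a matrix A ∈ 𝒜_k and orthogonal k × k matrices g, h such that P is the image of the column span of A under the block-diagonal orthogonal transformation (x, y) ↦ (g x, h y) of ℝ^{2k} = ℝ^k × ℝ^k. -/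
/-- A `k × k` real matrix is in row echelon form with positive pivots: zero rows lie below
all nonzero rows, the pivot (first nonzero entry) indices of the nonzero rows strictly
increase from top to bottom, and every pivot is positive. -/
def IsRowEchelonPos {k : ℕ} (M : Matrix (Fin k) (Fin k) ℝ) : Prop :=
  (∀ i i' : Fin k, i ≤ i' → M i = 0 → M i' = 0) ∧
  (∀ i i' : Fin k, i < i' → M i ≠ 0 → M i' ≠ 0 →
    ∀ p p' : Fin k, (M i p ≠ 0 ∧ ∀ j, j < p → M i j = 0) →
      (M i' p' ≠ 0 ∧ ∀ j, j < p' → M i' j = 0) → p < p') ∧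
  (∀ i p : Fin k, (M i p ≠ 0 ∧ ∀ j, j < p → M i j = 0) → 0 < M i p)

open Matrix


lemma isRowEchelonPos_permDiag {k : ℕ} (ρ : Equiv.Perm (Fin k)) (δ : Fin k → ℝ)
    (h0 : ∀ j, 0 ≤ δ j)
    (hz : ∀ i i' : Fin k, i ≤ i' → δ (ρ i) = 0 → δ (ρ i') = 0)
    (hm : ∀ i i' : Fin k, i < i' → δ (ρ i) ≠ 0 → δ (ρ i') ≠ 0 → ρ i < ρ i') :
    IsRowEchelonPos (Matrix.of fun i j => if j = ρ i then δ (ρ i) else 0) := by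
  set M : Matrix (Fin k) (Fin k) ℝ := Matrix.of fun i j => if j = ρ i then δ (ρ i) else 0 with hM
  have hrow0 : ∀ i : Fin k, δ (ρ i) = 0 → M i = 0 := by
    intro i h; funext j
    by_cases hj : j = ρ i <;> simp [hM, hj, h]
  have hrow0' : ∀ i : Fin k, M i = 0 → δ (ρ i) = 0 := by
    intro i h
    have := congrFun h (ρ i)
    simpa [hM] using this
  have hne : ∀ i p : Fin k, M i p ≠ 0 → p = ρ i ∧ δ (ρ i) ≠ 0 := by
    intro i p h
    by_cases hp : p = ρ i
    · exact ⟨hp, by simpa [hM, hp] using h⟩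
    · exact absurd (by simp [hM, hp]) h
  refine ⟨?_, ?_, ?_⟩
  · intro i i' hii h
    exact hrow0 i' (hz i i' hii (hrow0' i h))
  · intro i i' hlt _ _ p p' hp hp'
    obtain ⟨rfl, hd⟩ := hne i p hp.1
    obtain ⟨rfl, hd'⟩ := hne i' p' hp'.1
    exact hm i i' hlt hd hd'
  · intro i p hp
    obtain ⟨rfl, hd⟩ := hne i p hp.1
    have : M i (ρ i) = δ (ρ i) := by simp [hM]
    rw [this]
    exact (h0 _).lt_of_ne' hd

set_option maxHeartbeats 1000000 in
/-- Every `k`-dimensional subspace `P ⊆ ℝ^{2k} = ℝ^k × ℝ^k` (coordinates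
indexed by `Fin k ⊕ Fin k`) is the image of the column span of some `A = [B; C] ∈ 𝒜_k`
(i.e. `AᵀA = 1`, both blocks in row echelon form with positive pivots, and the column norms
of the bottom block `C` nondecreasing) under a block-diagonal orthogonal transformation
`(x, y) ↦ (g x, h y)` with `g, h` orthogonal `k × k` matrices. -/
theorem stmt15 (k : ℕ) (hk : 1 ≤ k)
    (P : Submodule ℝ (EuclideanSpace ℝ (Fin k ⊕ Fin k)))
    (hP : Module.finrank ℝ P = k) :
    ∃ A : Matrix (Fin k ⊕ Fin k) (Fin k) ℝ, ∃ g h : Matrix (Fin k) (Fin k) ℝ,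
      A.transpose * A = 1 ∧
      IsRowEchelonPos (Matrix.of fun i j => A (Sum.inl i) j) ∧
      IsRowEchelonPos (Matrix.of fun i j => A (Sum.inr i) j) ∧
      (∀ j j' : Fin k, j ≤ j' →
        ‖(EuclideanSpace.equiv (Fin k) ℝ).symm (fun i => A (Sum.inr i) j)‖ ≤
          ‖(EuclideanSpace.equiv (Fin k) ℝ).symm (fun i => A (Sum.inr i) j')‖) ∧
      g.transpose * g = 1 ∧ h.transpose * h = 1 ∧
      P = Submodule.span ℝ (Set.range fun c : Fin k =>
        (EuclideanSpace.equiv (Fin k ⊕ Fin k) ℝ).symm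
          (Sum.elim (fun i' : Fin k => ∑ j' : Fin k, g i' j' * A (Sum.inl j') c)
            (fun i' : Fin k => ∑ j' : Fin k, h i' j' * A (Sum.inr j') c))) := by
  classical
  -- orthonormal basis of P
  let b0 : OrthonormalBasis (Fin k) ℝ P :=
    (stdOrthonormalBasis ℝ P).reindex (finCongr hP)
  let v : Fin k → EuclideanSpace ℝ (Fin k ⊕ Fin k) := fun c => (b0 c : _)
  have hvP : ∀ c, v c ∈ P := fun c => (b0 c).2
  have hv : ∀ c c', (∑ t, v c t * v c' t) = if c = c' then 1 else 0 := by
    intro c c'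
    have h1 := orthonormal_iff_ite.mp b0.orthonormal c c'
    have h2 : (inner ℝ (v c) (v c') : ℝ) = if c = c' then 1 else 0 := by
      rw [Submodule.coe_inner] at h1
      exact h1
    rw [← h2]
    simp [PiLp.inner_apply, RCLike.inner_apply, mul_comm]
  -- block matrices of the basis
  let M0 : Matrix (Fin k ⊕ Fin k) (Fin k) ℝ := fun t c => v c t
  let X0 : Matrix (Fin k) (Fin k) ℝ := fun t c => v c (Sum.inl t)
  let Y0 : Matrix (Fin k) (Fin k) ℝ := fun t c => v c (Sum.inr t)
  have hM0 : M0ᵀ * M0 = 1 := by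
    ext c c'
    rw [Matrix.mul_apply]
    simp only [Matrix.transpose_apply]
    simpa [M0, Matrix.one_apply] using hv c c'
  -- Gram matrix of bottom halves and its spectral decomposition
  let G : Matrix (Fin k) (Fin k) ℝ := Y0ᵀ * Y0
  have hG : G.IsHermitian := by
    have := Matrix.isHermitian_conjTranspose_mul_self Y0
    rwa [Matrix.conjTranspose_eq_transpose_of_trivial] at this
  let σ : Equiv.Perm (Fin k) := Tuple.sort hG.eigenvalues
  let e : Fin k → ℝ := fun j => hG.eigenvalues (σ j)
  have he_mono : Monotone e := Tuple.monotone_sort hG.eigenvalues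
  let Wm : Matrix (Fin k) (Fin k) ℝ := fun c j => hG.eigenvectorBasis (σ j) c
  have hWm : Wmᵀ * Wm = 1 := by
    ext a b
    rw [Matrix.mul_apply]
    have h1 := orthonormal_iff_ite.mp hG.eigenvectorBasis.orthonormal (σ a) (σ b)
    have h2 : (∑ c, hG.eigenvectorBasis (σ a) c * hG.eigenvectorBasis (σ b) c)
        = if σ a = σ b then 1 else 0 := by
      rw [← h1]
      simp [PiLp.inner_apply, RCLike.inner_apply, mul_comm]
    simp only [Matrix.transpose_apply, Matrix.one_apply]
    simp only [Wm]
    rw [h2]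
    simp [EmbeddingLike.apply_eq_iff_eq]
  have hGW : ∀ j c, ∑ c', G c c' * Wm c' j = e j * Wm c j := by
    intro j c
    have := congrFun (hG.mulVec_eigenvectorBasis (σ j)) c
    simpa [Matrix.mulVec, dotProduct, Wm, e] using this
  have hGWm : G * Wm = Wm * Matrix.diagonal e := by
    ext c j
    rw [Matrix.mul_apply, Matrix.mul_apply]
    rw [hGW j c]
    simp [Matrix.diagonal, mul_comm]
  -- transformed matrices
  let M : Matrix (Fin k ⊕ Fin k) (Fin k) ℝ := M0 * Wm
  let X : Matrix (Fin k) (Fin k) ℝ := X0 * Wm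
  let Y : Matrix (Fin k) (Fin k) ℝ := Y0 * Wm
  have hMM : Mᵀ * M = 1 := by
    rw [show Mᵀ * M = Wmᵀ * (M0ᵀ * M0) * Wm by
      simp [M, Matrix.transpose_mul, Matrix.mul_assoc]]
    rw [hM0, Matrix.mul_one, hWm]
  have hYY : Yᵀ * Y = Matrix.diagonal e := by
    rw [show Yᵀ * Y = Wmᵀ * (G * Wm) by
      simp [Y, G, Matrix.transpose_mul, Matrix.mul_assoc]]
    rw [hGWm, ← Matrix.mul_assoc, hWm, Matrix.one_mul]
  have hsplit : Mᵀ * M = Xᵀ * X + Yᵀ * Y := by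
    ext c c'
    rw [Matrix.mul_apply, Matrix.add_apply, Matrix.mul_apply, Matrix.mul_apply,
      Fintype.sum_sum_type]
    congr 1
  have hXX : Xᵀ * X = Matrix.diagonal (fun j => 1 - e j) := by
    have : Xᵀ * X = 1 - Matrix.diagonal e := by
      rw [← hMM, hsplit, hYY]; abel
    rw [this, ← Matrix.diagonal_one, ← Matrix.diagonal_sub]
  -- diagonal entries
  have hy_inner : ∀ i j, (∑ t, Y t i * Y t j) = if i = j then e i else 0 := by
    intro i j
    have h1 : (Yᵀ * Y) i j = Matrix.diagonal e i j := by rw [hYY]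
    rw [Matrix.mul_apply] at h1
    simpa [Matrix.transpose_apply, Matrix.diagonal] using h1
  have hx_inner : ∀ i j, (∑ t, X t i * X t j) = if i = j then 1 - e i else 0 := by
    intro i j
    have h1 : (Xᵀ * X) i j = Matrix.diagonal (fun j => 1 - e j) i j := by rw [hXX]
    rw [Matrix.mul_apply] at h1
    simpa [Matrix.transpose_apply, Matrix.diagonal] using h1
  have he0 : ∀ j, 0 ≤ e j := by
    intro j
    have h1 := hy_inner j j
    rw [if_pos rfl] at h1
    rw [← h1]
    exact Finset.sum_nonneg fun t _ => mul_self_nonneg _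
  have he1 : ∀ j, e j ≤ 1 := by
    intro j
    have h1 := hx_inner j j
    rw [if_pos rfl] at h1
    nlinarith [Finset.sum_nonneg (fun t (_ : t ∈ Finset.univ) => mul_self_nonneg (X t j))]
  set β : Fin k → ℝ := fun j => Real.sqrt (1 - e j) with hβdef
  set γ : Fin k → ℝ := fun j => Real.sqrt (e j) with hγdef
  have hβ0 : ∀ j, 0 ≤ β j := fun j => Real.sqrt_nonneg _
  have hγ0 : ∀ j, 0 ≤ γ j := fun j => Real.sqrt_nonneg _
  have hβ2 : ∀ j, β j * β j = 1 - e j := fun j => Real.mul_self_sqrt (by linarith [he1 j])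
  have hγ2 : ∀ j, γ j * γ j = e j := fun j => Real.mul_self_sqrt (he0 j)
  have hγmono : Monotone γ := fun a b hab => Real.sqrt_le_sqrt (he_mono hab)
  have hβanti : Antitone β := fun a b hab =>
    Real.sqrt_le_sqrt (by have := he_mono hab; linarith)
  have hXcol : ∀ j, β j = 0 → ∀ t, X t j = 0 := by
    intro j hb t
    have h2 : 1 - e j = 0 := by rw [← hβ2 j, hb]; ring
    have h1 := hx_inner j j
    rw [if_pos rfl, h2] at h1
    have h3 := (Finset.sum_eq_zero_iff_of_nonneg
      (fun t (_ : t ∈ Finset.univ) => mul_self_nonneg (X t j))).mp h1 t (Finset.mem_univ t)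
    exact mul_self_eq_zero.mp h3
  have hYcol : ∀ j, γ j = 0 → ∀ t, Y t j = 0 := by
    intro j hb t
    have h2 : e j = 0 := by rw [← hγ2 j, hb]; ring
    have h1 := hy_inner j j
    rw [if_pos rfl, h2] at h1
    have h3 := (Finset.sum_eq_zero_iff_of_nonneg
      (fun t (_ : t ∈ Finset.univ) => mul_self_nonneg (Y t j))).mp h1 t (Finset.mem_univ t)
    exact mul_self_eq_zero.mp h3
  -- permutation putting zero rows of diag γ at the bottom
  set F : Fin k → ℕ := fun j => if γ j = 0 then k + (j : ℕ) else (j : ℕ) with hFdef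
  have hFinj : Function.Injective F := by
    intro a b hab
    have ha' := a.isLt
    have hb' := b.isLt
    by_cases ha : γ a = 0 <;> by_cases hb : γ b = 0 <;>
      simp only [hFdef, ha, hb, if_pos, if_neg, if_true, if_false] at hab <;>
      first
        | exact Fin.ext (by omega)
        | omega
  set ρ : Equiv.Perm (Fin k) := Tuple.sort F with hρdef
  have hFs : StrictMono (F ∘ ρ) :=
    (Tuple.monotone_sort F).strictMono_of_injective (hFinj.comp ρ.injective)
  have hρz : ∀ i i' : Fin k, i ≤ i' → γ (ρ i) = 0 → γ (ρ i') = 0 := by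
    intro i i' hii h0'
    by_contra hne
    have h3 : F (ρ i) ≤ F (ρ i') := hFs.monotone hii
    have h4 := (ρ i').isLt
    simp only [hFdef, h0', hne, if_pos, if_neg, if_true, if_false] at h3
    omega
  have hρm : ∀ i i' : Fin k, i < i' → γ (ρ i) ≠ 0 → γ (ρ i') ≠ 0 → ρ i < ρ i' := by
    intro i i' hlt h1 h2
    have h3 : F (ρ i) < F (ρ i') := hFs hlt
    simp only [hFdef, h1, h2, if_neg, if_false] at h3
    exact h3
  -- orthonormal column families and their extensions to orthonormal bases
  let xcol : Fin k → EuclideanSpace ℝ (Fin k) := fun j => WithLp.toLp 2 (fun t => X t j)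
  let ycol : Fin k → EuclideanSpace ℝ (Fin k) := fun j => WithLp.toLp 2 (fun t => Y t j)
  have hxcol_inner : ∀ i j, (inner ℝ (xcol i) (xcol j) : ℝ) = if i = j then 1 - e i else 0 := by
    intro i j
    rw [← hx_inner i j]
    simp [PiLp.inner_apply, RCLike.inner_apply, xcol, mul_comm]
  have hycol_inner : ∀ i j, (inner ℝ (ycol i) (ycol j) : ℝ) = if i = j then e i else 0 := by
    intro i j
    rw [← hy_inner i j]
    simp [PiLp.inner_apply, RCLike.inner_apply, ycol, mul_comm]
  set S : Set (Fin k) := {j | β j ≠ 0} with hSdef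
  set u : Fin k → EuclideanSpace ℝ (Fin k) := fun j => (β j)⁻¹ • xcol j with hudef
  have hu : Orthonormal ℝ (S.restrict u) := by
    rw [orthonormal_iff_ite]
    rintro ⟨i, hi⟩ ⟨j, hj⟩
    simp only [Set.restrict, Set.domRestrict_apply, hudef]
    rw [real_inner_smul_left, real_inner_smul_right, hxcol_inner i j]
    by_cases hij : i = j
    · subst hij
      simp only [if_pos rfl, Subtype.mk.injEq]
      rw [← hβ2 i]
      have hb : β i ≠ 0 := hi
      field_simp
      simp
    · have : (⟨i, hi⟩ : S) ≠ ⟨j, hj⟩ := by simp [Subtype.ext_iff, hij]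
      simp [hij, this]
  obtain ⟨gb, hgb⟩ := hu.exists_orthonormalBasis_extension_of_card_eq
    (by simp [finrank_euclideanSpace])
  set gmat : Matrix (Fin k) (Fin k) ℝ := fun i j => gb j i with hgmatdef
  have hgg : gmatᵀ * gmat = 1 := by
    ext a b
    rw [Matrix.mul_apply]
    have h1 := orthonormal_iff_ite.mp gb.orthonormal a b
    have h2 : (∑ c, gb a c * gb b c) = if a = b then 1 else 0 := by
      rw [← h1]
      simp [PiLp.inner_apply, RCLike.inner_apply, mul_comm]
    simp only [Matrix.transpose_apply]
    simpa [hgmatdef, Matrix.transpose_apply, Matrix.one_apply] using h2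
  have hgX : ∀ j t, β j * gb j t = X t j := by
    intro j t
    by_cases hb : β j = 0
    · rw [hb, hXcol j hb t]; ring
    · rw [hgb j hb]
      simp only [hudef, PiLp.smul_apply, smul_eq_mul, xcol]
      field_simp
  set S' : Set (Fin k) := {i | γ (ρ i) ≠ 0} with hS'def
  set w : Fin k → EuclideanSpace ℝ (Fin k) := fun i => (γ (ρ i))⁻¹ • ycol (ρ i) with hwdef
  have hw : Orthonormal ℝ (S'.restrict w) := by
    rw [orthonormal_iff_ite]
    rintro ⟨i, hi⟩ ⟨j, hj⟩
    simp only [Set.restrict, Set.domRestrict_apply, hwdef]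
    rw [real_inner_smul_left, real_inner_smul_right, hycol_inner (ρ i) (ρ j)]
    by_cases hij : i = j
    · subst hij
      simp only [if_pos rfl, Subtype.mk.injEq]
      rw [← hγ2 (ρ i)]
      have hb : γ (ρ i) ≠ 0 := hi
      field_simp
      simp
    · have h5 : ρ i ≠ ρ j := fun hc => hij (ρ.injective hc)
      have : (⟨i, hi⟩ : S') ≠ ⟨j, hj⟩ := by simp [Subtype.ext_iff, hij]
      simp [h5, this]
  obtain ⟨hb', hhb⟩ := hw.exists_orthonormalBasis_extension_of_card_eq
    (by simp [finrank_euclideanSpace])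
  set hmat : Matrix (Fin k) (Fin k) ℝ := fun i j => hb' j i with hhmatdef
  have hhh : hmatᵀ * hmat = 1 := by
    ext a b
    rw [Matrix.mul_apply]
    have h1 := orthonormal_iff_ite.mp hb'.orthonormal a b
    have h2 : (∑ c, hb' a c * hb' b c) = if a = b then 1 else 0 := by
      rw [← h1]
      simp [PiLp.inner_apply, RCLike.inner_apply, mul_comm]
    simp only [Matrix.transpose_apply]
    simpa [hhmatdef, Matrix.transpose_apply, Matrix.one_apply] using h2
  have hhY : ∀ c t, γ c * hb' (ρ.symm c) t = Y t c := by
    intro c t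
    by_cases hc : γ c = 0
    · rw [hc, hYcol c hc t]; ring
    · have hmem : ρ.symm c ∈ S' := by
        simp only [hS'def, Set.mem_setOf_eq, Equiv.apply_symm_apply]
        exact hc
      rw [hhb _ hmem]
      simp only [hwdef, PiLp.smul_apply, smul_eq_mul, ycol, Equiv.apply_symm_apply]
      field_simp
  -- the matrix A
  set A : Matrix (Fin k ⊕ Fin k) (Fin k) ℝ := fun s c =>
    Sum.elim (fun i => if c = i then β i else 0) (fun i => if c = ρ i then γ (ρ i) else 0) s
    with hAdef
  have hsum1 : ∀ (f : Fin k → ℝ) (c c' : Fin k),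
      (∑ i, (if c = i then f i else 0) * (if c' = i then f i else 0))
        = if c = c' then f c * f c else 0 := by
    intro f c c'
    rw [Finset.sum_eq_single c]
    · by_cases hcc : c = c'
      · subst hcc; simp
      · simp [hcc, Ne.symm hcc]
    · intro b _ hb
      simp [Ne.symm hb]
    · intro hc; exact absurd (Finset.mem_univ c) hc
  refine ⟨A, gmat, hmat, ?_, ?_, ?_, ?_, hgg, hhh, ?_⟩
  · -- AᵀA = 1
    ext c c'
    rw [Matrix.mul_apply, Fintype.sum_sum_type]
    have e1 : (∑ i, Aᵀ c (Sum.inl i) * A (Sum.inl i) c')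
        = if c = c' then β c * β c else 0 := by
      simp only [Matrix.transpose_apply, hAdef, Sum.elim_inl]
      exact hsum1 β c c'
    have e2 : (∑ i, Aᵀ c (Sum.inr i) * A (Sum.inr i) c')
        = if c = c' then γ c * γ c else 0 := by
      simp only [Matrix.transpose_apply]
      simp only [hAdef, Sum.elim_inr]
      rw [Equiv.sum_comp ρ (fun x => (if c = x then γ x else 0) * (if c' = x then γ x else 0))]
      exact hsum1 γ c c'
    rw [e1, e2, Matrix.one_apply]
    by_cases hcc : c = c'
    · subst hcc
      rw [if_pos rfl, if_pos rfl, if_pos rfl, hβ2, hγ2]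
      ring
    · simp [hcc]
  · -- top block echelon
    have hz : ∀ i i' : Fin k, i ≤ i' → β ((Equiv.refl (Fin k)) i) = 0 →
        β ((Equiv.refl (Fin k)) i') = 0 := fun i i' hii h0 =>
      le_antisymm (h0 ▸ hβanti hii) (hβ0 _)
    have hm : ∀ i i' : Fin k, i < i' → β ((Equiv.refl (Fin k)) i) ≠ 0 →
        β ((Equiv.refl (Fin k)) i') ≠ 0 → (Equiv.refl (Fin k)) i < (Equiv.refl (Fin k)) i' :=
      fun i i' hii _ _ => hii
    exact isRowEchelonPos_permDiag (Equiv.refl (Fin k)) β hβ0 hz hm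
  · -- bottom block echelon
    exact isRowEchelonPos_permDiag ρ γ hγ0 hρz hρm
  · -- column norms nondecreasing
    have hnorm : ∀ j : Fin k,
        ‖(EuclideanSpace.equiv (Fin k) ℝ).symm (fun i => A (Sum.inr i) j)‖ = γ j := by
      intro j
      rw [EuclideanSpace.norm_eq]
      have h1 : ∀ i : Fin k,
          ((EuclideanSpace.equiv (Fin k) ℝ).symm (fun i => A (Sum.inr i) j)) i
            = if j = ρ i then γ (ρ i) else 0 := fun i => rfl
      calc Real.sqrt (∑ i, ‖((EuclideanSpace.equiv (Fin k) ℝ).symm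
              (fun i => A (Sum.inr i) j)) i‖ ^ 2)
          = Real.sqrt (∑ i, ‖(if j = ρ i then γ (ρ i) else 0 : ℝ)‖ ^ 2) := by
            rfl
        _ = Real.sqrt (∑ x, ‖(if j = x then γ x else 0 : ℝ)‖ ^ 2) := by
            rw [Equiv.sum_comp ρ (fun x => ‖(if j = x then γ x else 0 : ℝ)‖ ^ 2)]
        _ = γ j := by
            rw [show (∑ x, ‖(if j = x then γ x else 0 : ℝ)‖ ^ 2) = γ j ^ 2 by
              rw [Finset.sum_eq_single j]
              · simp
              · intro b _ hb; simp [Ne.symm hb]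
              · intro hc; exact absurd (Finset.mem_univ j) hc]
            exact Real.sqrt_sq (hγ0 j)
    intro j j' hjj
    rw [hnorm j, hnorm j']
    exact hγmono hjj
  · -- the span
    set mvec : Fin k → EuclideanSpace ℝ (Fin k ⊕ Fin k) :=
      fun c => (EuclideanSpace.equiv (Fin k ⊕ Fin k) ℝ).symm (fun t => M t c) with hmvecdef
    have hFm : (fun c : Fin k => (EuclideanSpace.equiv (Fin k ⊕ Fin k) ℝ).symm
        (Sum.elim (fun i' : Fin k => ∑ j' : Fin k, gmat i' j' * A (Sum.inl j') c)
          (fun i' : Fin k => ∑ j' : Fin k, hmat i' j' * A (Sum.inr j') c))) = mvec := by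
      funext c
      simp only [hmvecdef]
      congr 1
      funext t
      cases t with
      | inl i =>
        simp only [Sum.elim_inl]
        have e1 : (∑ j' : Fin k, gmat i j' * A (Sum.inl j') c) = β c * gb c i := by
          rw [Finset.sum_eq_single c]
          · simp only [hgmatdef, hAdef, Sum.elim_inl, eq_self_iff_true, if_true]; ring
          · intro b _ hb
            simp [hAdef, Ne.symm hb]
          · intro hc; exact absurd (Finset.mem_univ c) hc
        rw [e1, hgX c i]
        simp [M, M0, X, X0, Matrix.mul_apply]
        rfl
      | inr i =>
        simp only [Sum.elim_inr]
        have e1 : (∑ j' : Fin k, hmat i j' * A (Sum.inr j') c) = γ c * hb' (ρ.symm c) i := by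
          rw [Finset.sum_eq_single (ρ.symm c)]
          · simp only [hhmatdef, hAdef, Sum.elim_inr]
            rw [Equiv.apply_symm_apply, if_pos rfl]
            ring
          · intro b _ hb
            have : c ≠ ρ b := fun hc => hb (by rw [hc, Equiv.symm_apply_apply])
            simp [hAdef, this]
          · intro hc; exact absurd (Finset.mem_univ (ρ.symm c)) hc
        rw [e1, hhY c i]
        simp [M, M0, Y, Y0, Matrix.mul_apply]
        rfl
    rw [hFm]
    have hle : Submodule.span ℝ (Set.range mvec) ≤ P := by
      rw [Submodule.span_le]
      rintro _ ⟨c, rfl⟩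
      have hmv : mvec c = ∑ j, Wm j c • v j := by
        ext t
        simp only [hmvecdef]
        rw [show ((∑ j, Wm j c • v j) t) = ∑ j, Wm j c * v j t by
          rw [WithLp.ofLp_sum, Finset.sum_apply]; simp]
        simp [M, M0, Matrix.mul_apply, mul_comm]
        rfl
      rw [hmv]
      exact Submodule.sum_mem _ fun j _ => Submodule.smul_mem _ _ (hvP j)
    have hmorth : Orthonormal ℝ mvec := by
      rw [orthonormal_iff_ite]
      intro i j
      have h1 : (Mᵀ * M) i j = if i = j then 1 else 0 := by
        rw [hMM, Matrix.one_apply]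
      rw [Matrix.mul_apply] at h1
      rw [← h1]
      simp [PiLp.inner_apply, RCLike.inner_apply, hmvecdef, mul_comm]
    have hrank : Module.finrank ℝ (Submodule.span ℝ (Set.range mvec)) = k := by
      rw [finrank_span_eq_card hmorth.linearIndependent]
      simp
    exact (Submodule.eq_of_le_of_finrank_le hle (by rw [hP, hrank])).symm
end
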